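/- For every c > 0, the sequence of iterates F_cⁿ(δ₁) is nondecreasing in the stochastic order, and it converges weakly to a limit distribution μ₁ which is supported on ℕ⁺, has finite mean, and satisfies F_c(μ₁) = μ₁. -/

import Mathlib

open Filter Topology Set

noncomputable section

/-- Convolution of two (sub)probability mass functions on `ℕ∞ = ℕ⁺ ∪ {∞} ∪ {0}`,
with the convention `∞ + anything = ∞`. -/
def conv (μ ν : ℕ∞ → ℝ) : ℕ∞ → ℝ :=
  fun k => ∑' p : ℕ∞ × ℕ∞, if p.1 + p.2 = k then μ p.1 * ν p.2 else 0

/-- The factor `(l(l-1)/2) / (l(l-1)/2 + c)`, the probability that the coalescence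
from `l` to `l-1` lineages happens before an independent `Exp(c)` time. -/
def kingmanFactor (c : ℝ) (l : ℕ) : ℝ :=
  ((l : ℝ) * ((l : ℝ) - 1) / 2) / ((l : ℝ) * ((l : ℝ) - 1) / 2 + c)

/-- `pK c j i` : the probability that Kingman's coalescent started from `j` lineages
has exactly `i` lineages at an independent exponential time with rate `c`. -/
def pK (c : ℝ) (j : ℕ∞) (i : ℕ) : ℝ :=
  (c / ((i : ℝ) * ((i : ℝ) - 1) / 2 + c)) *
    (if j = ⊤ then ∏' l : ℕ, kingmanFactor c (i + 1 + l)
     else ∏ l ∈ Finset.Icc (i + 1) j.toNat, kingmanFactor c l)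

/-- The mass that `F_c μ` puts on a finite `k ∈ ℕ⁺`. -/
def FcFin (c : ℝ) (μ : ℕ∞ → ℝ) (k : ℕ) : ℝ :=
  ∑' j : ℕ∞, if (k : ℕ∞) ≤ j then conv μ μ j * pK c j k else 0

/-- The map `F_c` on distributions on `ℕ⁺ ∪ {∞}`; the mass at `∞` is the remaining mass. -/
def Fc (c : ℝ) (μ : ℕ∞ → ℝ) : ℕ∞ → ℝ :=
  fun k =>
    if k = ⊤ then 1 - ∑' n : ℕ, FcFin c μ n
    else if k = 0 then 0 else FcFin c μ k.toNat

/-- `μ` is a probability distribution on `ℕ⁺ ∪ {∞}` (no mass at `0`). -/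
def IsDist (μ : ℕ∞ → ℝ) : Prop :=
  (∀ k, 0 ≤ μ k) ∧ μ 0 = 0 ∧ HasSum μ 1

/-- The mean of a distribution on `ℕ⁺ ∪ {∞}` (ignoring the mass at `∞`). -/
def distMean (μ : ℕ∞ → ℝ) : ℝ := ∑' n : ℕ, (n : ℝ) * μ (n : ℕ∞)

/-- `μ` belongs to `S₁`: a probability distribution on `ℕ⁺` with finite mean. -/
def MemS1 (μ : ℕ∞ → ℝ) : Prop :=
  IsDist μ ∧ μ ⊤ = 0 ∧ Summable (fun n : ℕ => (n : ℝ) * μ (n : ℕ∞))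

/-- `StDom μ ν` : `μ ⪯ ν` in the usual stochastic order, i.e.
`μ([0,x]) ≥ ν([0,x])` for all `x ∈ [0,∞]`. -/
def StDom (μ ν : ℕ∞ → ℝ) : Prop :=
  ∀ x : ℕ∞, (∑' k : ℕ∞, if k ≤ x then ν k else 0) ≤ ∑' k : ℕ∞, if k ≤ x then μ k else 0

/-- The unit point mass at `a`. -/
def delta (a : ℕ∞) : ℕ∞ → ℝ := fun k => if k = a then 1 else 0

end

/-!
On finitely supported distributions `F_c` is monotone for the stochastic order: the mass
that `F_c(μ)` puts below `i` is `E[g(X + Y)]` for independent `X, Y ~ μ`, where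
`g j = P(K_j < i)` and `K_j` is the number of lineages left from `j`. Since `K_{j+1}` is a
mixture of `K_j` and the point mass at `j + 1`, `g` is antitone, and summation by parts turns
the comparison of distribution functions into a comparison of these expectations. As `δ₁` is
the least distribution on `ℕ⁺`, the iterates increase and their distribution functions converge.

Coalescence gives `E[K_j] ≤ 1 + 8c² + j/4`, hence `mean F_c(μ) ≤ 1 + 8c² + mean μ / 2`, and
all iterates have mean at most `2 + 16c²`. This uniform bound makes the iterates tight, so the
limit `μ₁` is a probability distribution on `ℕ⁺` with finite mean, and it lets the limit pass
through the series defining `F_c`, which gives `F_c(μ₁) = μ₁`.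
-/

open Finset

theorem hasSum_of_tendsto_of_tail_le {f : ℕ → ℕ → ℝ} {g a ε : ℕ → ℝ} {A : ℝ}
    (hf : ∀ n j, 0 ≤ f n j) (hfa : ∀ n, HasSum (f n) (a n))
    (hfg : ∀ j, Tendsto (fun n => f n j) atTop (𝓝 (g j))) (ha : Tendsto a atTop (𝓝 A))
    (hε : Tendsto ε atTop (𝓝 0))
    (htail : ∀ᶠ J in atTop, ∀ n, a n ≤ ∑ j ∈ range J, f n j + ε J) :
    HasSum g A := by
  have hg (j : ℕ) : 0 ≤ g j := ge_of_tendsto' (hfg j) fun n => hf n j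
  have hpartial (J : ℕ) :
      Tendsto (fun n => ∑ j ∈ range J, f n j) atTop (𝓝 (∑ j ∈ range J, g j)) :=
    tendsto_finsetSum _ fun j _ => hfg j
  have upper (J : ℕ) : ∑ j ∈ range J, g j ≤ A :=
    le_of_tendsto_of_tendsto' (hpartial J) ha fun n =>
      sum_le_hasSum _ (fun j _ => hf n j) (hfa n)
  have lower : ∀ᶠ J in atTop, A - ε J ≤ ∑ j ∈ range J, g j := htail.mono fun J hJ => by
    linarith [le_of_tendsto_of_tendsto' ha ((hpartial J).add_const (ε J)) hJ]
  rw [hasSum_iff_tendsto_nat_of_nonneg hg]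
  refine tendsto_of_tendsto_of_tendsto_of_le_of_le' ?_ tendsto_const_nhds lower
    (.of_forall upper)
  simpa using tendsto_const_nhds.sub hε

theorem sub_sum_range_le_of_le {f g : ℕ → ℝ} {a b : ℝ} (hf : HasSum f a) (hg : HasSum g b)
    (hfg : ∀ j, f j ≤ g j) (J : ℕ) :
    a - ∑ j ∈ range J, f j ≤ b - ∑ j ∈ range J, g j := by
  rw [← hf.tsum_eq, ← hg.tsum_eq, ← hf.summable.sum_add_tsum_nat_add J,
    ← hg.summable.sum_add_tsum_nat_add J, add_sub_cancel_left, add_sub_cancel_left]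
  exact Summable.tsum_le_tsum (fun j => hfg _) ((summable_nat_add_iff J).2 hf.summable)
    ((summable_nat_add_iff J).2 hg.summable)

theorem sum_range_mul_le_of_antitone {g w w' : ℕ → ℝ} {n : ℕ} (hg : Antitone g)
    (hw : ∀ i, ∑ m ∈ range i, w' m ≤ ∑ m ∈ range i, w m)
    (hn : ∑ m ∈ range n, w' m = ∑ m ∈ range n, w m) :
    ∑ m ∈ range n, g m * w' m ≤ ∑ m ∈ range n, g m * w m := by
  have h := sum_range_by_parts g w n
  have h' := sum_range_by_parts g w' n
  simp only [smul_eq_mul] at h h'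
  rw [h, h', hn]
  exact sub_le_sub_left (sum_le_sum fun i _ =>
    mul_le_mul_of_nonpos_left (hw _) (sub_nonpos.2 (hg i.le_succ))) _

theorem tsum_enat_eq {f : ℕ∞ → ℝ} (hf : f ⊤ = 0) : ∑' k, f k = ∑' n : ℕ, f n := by
  refine (Nat.cast_injective.tsum_eq fun k hk => ?_).symm
  induction k using ENat.recTopCoe with
  | top => exact absurd hf hk
  | coe m => exact ⟨m, rfl⟩

theorem hasSum_enat_iff {f : ℕ∞ → ℝ} {a : ℝ} (hf : f ⊤ = 0) :
    HasSum f a ↔ HasSum (fun n : ℕ => f n) a := by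
  refine (Nat.cast_injective.hasSum_iff fun k hk => ?_).symm
  induction k using ENat.recTopCoe with
  | top => exact hf
  | coe m => exact absurd ⟨m, rfl⟩ hk

noncomputable section Kingman

variable {c : ℝ}

theorem natCast_mul_natCast_sub_one_nonneg (l : ℕ) : 0 ≤ (l : ℝ) * ((l : ℝ) - 1) := by
  rcases l with _ | l
  · simp
  · push_cast; nlinarith

theorem kingmanFactor_one (c : ℝ) : kingmanFactor c 1 = 0 := by simp [kingmanFactor]

theorem one_sub_kingmanFactor (hc : 0 < c) (l : ℕ) :
    1 - kingmanFactor c l = c / ((l : ℝ) * ((l : ℝ) - 1) / 2 + c) := by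
  have := natCast_mul_natCast_sub_one_nonneg l
  rw [kingmanFactor, eq_div_iff (by positivity), sub_mul, div_mul_cancel₀ _ (by positivity)]
  ring

theorem kingmanFactor_nonneg (hc : 0 < c) (l : ℕ) : 0 ≤ kingmanFactor c l := by
  have := natCast_mul_natCast_sub_one_nonneg l
  exact div_nonneg (by linarith) (by linarith)

theorem kingmanFactor_le_one (hc : 0 < c) (l : ℕ) : kingmanFactor c l ≤ 1 := by
  have := natCast_mul_natCast_sub_one_nonneg l
  exact div_le_one_of_le₀ (by linarith) (by linarith)

theorem one_sub_kingmanFactor_mul_le (hc : 0 < c) {j : ℕ} (hj : 1 ≤ j) :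
    (1 - kingmanFactor c (j + 1)) * (j + 1) ≤ 1 / 4 + 8 * c ^ 2 / j - 8 * c ^ 2 / (j + 1) := by
  have hx : (1 : ℝ) ≤ j := by exact_mod_cast hj
  have hx0 : (0 : ℝ) < j := by linarith
  rw [one_sub_kingmanFactor hc]
  push_cast
  rw [add_sub_cancel_right]
  have hrate : c / (((j : ℝ) + 1) * j / 2 + c) * ((j : ℝ) + 1) ≤ 2 * c / j := by
    rw [div_mul_eq_mul_div, div_le_div_iff₀ (by positivity) hx0]
    nlinarith
  -- AM–GM: `2c/j ≤ 1/4 + 4c²/j² ≤ 1/4 + 8c²/(j(j+1))`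
  have hamgm : 2 * c / j ≤ 1 / 4 + 8 * c ^ 2 / j - 8 * c ^ 2 / (j + 1) := by
    have key : 8 * c ^ 2 / j - 8 * c ^ 2 / (j + 1) = 8 * c ^ 2 / (j * (j + 1)) := by
      field_simp; ring
    have hxx : (0 : ℝ) < j * (j + 1) := by positivity
    rw [add_sub_assoc, key, div_add_div _ _ (by norm_num) hxx.ne',
      div_le_div_iff₀ hx0 (by positivity)]
    nlinarith [sq_nonneg ((j : ℝ) - 4 * c), mul_nonneg hc.le (sq_nonneg ((j : ℝ) - 4 * c))]
  linarith

/-- `p_c(j, k)` for `k ≤ j` and `0` otherwise (the formula `pK` does not vanish for `k > j`). -/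
def kingmanKernel (c : ℝ) (j k : ℕ) : ℝ := if k ≤ j then pK c j k else 0

theorem pK_natCast (c : ℝ) (j k : ℕ) :
    pK c j k =
      c / ((k : ℝ) * ((k : ℝ) - 1) / 2 + c) * ∏ l ∈ Icc (k + 1) j, kingmanFactor c l := by
  simp [pK]

theorem kingmanKernel_zero_zero (hc : c ≠ 0) : kingmanKernel c 0 0 = 1 := by
  rw [kingmanKernel, if_pos le_rfl, pK_natCast]
  simp [hc]

theorem kingmanKernel_of_lt {j k : ℕ} (h : j < k) : kingmanKernel c j k = 0 :=
  if_neg (by omega)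

theorem kingmanKernel_zero_right {j : ℕ} (hj : 1 ≤ j) : kingmanKernel c j 0 = 0 := by
  rw [kingmanKernel, if_pos (Nat.zero_le _), pK_natCast,
    prod_eq_zero (mem_Icc.2 ⟨le_rfl, hj⟩) (kingmanFactor_one c), mul_zero]

theorem kingmanKernel_succ_of_le {j k : ℕ} (h : k ≤ j) :
    kingmanKernel c (j + 1) k = kingmanFactor c (j + 1) * kingmanKernel c j k := by
  rw [kingmanKernel, if_pos (by omega), kingmanKernel, if_pos h, pK_natCast, pK_natCast,
    prod_Icc_succ_top (by omega)]
  ring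

theorem kingmanKernel_succ_self (hc : 0 < c) (j : ℕ) :
    kingmanKernel c (j + 1) (j + 1) = 1 - kingmanFactor c (j + 1) := by
  rw [kingmanKernel, if_pos le_rfl, pK_natCast, Finset.Icc_eq_empty (by omega),
    Finset.prod_empty, mul_one, one_sub_kingmanFactor hc]

theorem kingmanKernel_nonneg (hc : 0 < c) (j k : ℕ) : 0 ≤ kingmanKernel c j k := by
  unfold kingmanKernel
  split_ifs
  · have := natCast_mul_natCast_sub_one_nonneg k
    rw [pK_natCast]
    exact mul_nonneg (div_nonneg hc.le (by linarith))
      (prod_nonneg fun l _ => kingmanFactor_nonneg hc l)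
  · exact le_rfl

def kingmanExpect (c : ℝ) (φ : ℕ → ℝ) (j : ℕ) : ℝ :=
  ∑ k ∈ range (j + 1), φ k * kingmanKernel c j k

theorem kingmanExpect_zero (hc : c ≠ 0) (φ : ℕ → ℝ) : kingmanExpect c φ 0 = φ 0 := by
  simp [kingmanExpect, kingmanKernel_zero_zero hc]

theorem kingmanExpect_succ (hc : 0 < c) (φ : ℕ → ℝ) (j : ℕ) :
    kingmanExpect c φ (j + 1) = kingmanFactor c (j + 1) * kingmanExpect c φ j +
      (1 - kingmanFactor c (j + 1)) * φ (j + 1) := by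
  rw [kingmanExpect, sum_range_succ, kingmanKernel_succ_self hc, kingmanExpect, mul_sum,
    mul_comm _ (φ _)]
  congr 1
  exact sum_congr rfl fun k hk => by
    rw [kingmanKernel_succ_of_le (mem_range_succ_iff.1 hk)]
    ring

theorem sum_range_mul_kingmanKernel {j B : ℕ} (hj : j ≤ B) (φ : ℕ → ℝ) :
    ∑ k ∈ range (B + 1), φ k * kingmanKernel c j k = kingmanExpect c φ j :=
  (sum_subset (range_subset_range.2 (by omega)) fun k _ hk => by
    rw [kingmanKernel_of_lt (by simpa using hk), mul_zero]).symm

theorem kingmanExpect_one (hc : 0 < c) (j : ℕ) : kingmanExpect c (fun _ => 1) j = 1 := by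
  induction j with
  | zero => exact kingmanExpect_zero hc.ne' _
  | succ j ih => rw [kingmanExpect_succ hc, ih]; ring

theorem kingmanKernel_le_one (hc : 0 < c) (j k : ℕ) : kingmanKernel c j k ≤ 1 := by
  rcases le_or_gt k j with h | h
  · rw [← kingmanExpect_one hc j, kingmanExpect]
    simpa using single_le_sum (fun i _ => by simpa using kingmanKernel_nonneg hc j i)
      (mem_range_succ_iff.2 h)
  · rw [kingmanKernel_of_lt h]
    exact zero_le_one

theorem kingmanExpect_antitone (hc : 0 < c) {φ : ℕ → ℝ} (hφ : Antitone φ) :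
    Antitone (kingmanExpect c φ) := by
  have hf0 := kingmanFactor_nonneg hc
  have hf1 := kingmanFactor_le_one hc
  have hle (j : ℕ) : φ j ≤ kingmanExpect c φ j := by
    induction j with
    | zero => rw [kingmanExpect_zero hc.ne']
    | succ j ih =>
      rw [kingmanExpect_succ hc]
      nlinarith [hφ j.le_succ, hf0 (j + 1), hf1 (j + 1)]
  refine antitone_nat_of_succ_le fun j => ?_
  rw [kingmanExpect_succ hc]
  nlinarith [hφ j.le_succ, hle j, hf0 (j + 1), hf1 (j + 1)]

theorem kingmanExpect_id_le (hc : 0 < c) (j : ℕ) :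
    kingmanExpect c (fun k => k) j ≤ 1 + 8 * c ^ 2 + j / 4 := by
  have hnonneg (j : ℕ) : 0 ≤ kingmanExpect c (fun k => k) j :=
    sum_nonneg fun k _ => mul_nonneg k.cast_nonneg (kingmanKernel_nonneg hc j k)
  -- the extra `- 8 c² / j` makes the induction telescope
  have key : ∀ j, 1 ≤ j →
      kingmanExpect c (fun k => k) j ≤ 1 + 8 * c ^ 2 + j / 4 - 8 * c ^ 2 / j := by
    refine Nat.le_induction ?_ fun j hj ih => ?_
    · rw [kingmanExpect_succ hc, kingmanFactor_one, kingmanExpect_zero hc.ne']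
      norm_num
      linarith
    · have := one_sub_kingmanFactor_mul_le hc hj
      rw [kingmanExpect_succ hc]
      push_cast
      nlinarith [kingmanFactor_le_one hc (j + 1), hnonneg j]
  rcases Nat.eq_zero_or_pos j with rfl | hj
  · rw [kingmanExpect_zero hc.ne']
    norm_num
    positivity
  · have := key j hj
    have : 0 ≤ 8 * c ^ 2 / j := by positivity
    linarith

end Kingman

theorem conv_natCast (μ ν : ℕ∞ → ℝ) (m : ℕ) :
    conv μ ν m = ∑ p ∈ antidiagonal m, μ p.1 * ν p.2 := by
  let e : ℕ × ℕ ↪ ℕ∞ × ℕ∞ := Nat.castEmbedding.prodMap Nat.castEmbedding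
  rw [conv, tsum_eq_sum (s := (antidiagonal m).map e), sum_map]
  · refine sum_congr rfl fun p hp => if_pos ?_
    rw [Finset.HasAntidiagonal.mem_antidiagonal] at hp
    simp [e, ← hp]
  · rintro ⟨a, b⟩ hp
    refine if_neg fun h => hp ?_
    have ha : a ≠ ⊤ := fun ha => by simp [ha] at h
    have hb : b ≠ ⊤ := fun hb => by simp [hb] at h
    lift a to ℕ using ha
    lift b to ℕ using hb
    have hab : a + b = m := by dsimp only at h; exact_mod_cast h
    exact mem_map_of_mem e (by simpa using hab : (a, b) ∈ antidiagonal m)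

theorem conv_top {μ ν : ℕ∞ → ℝ} (hμ : μ ⊤ = 0) (hν : ν ⊤ = 0) : conv μ ν ⊤ = 0 := by
  refine (tsum_congr fun p => ?_).trans tsum_zero
  split_ifs with h
  · rcases ENat.add_eq_top.1 h with h | h <;> rw [h] <;> simp [hμ, hν]
  · rfl

theorem sum_range_mul_conv {μ ν : ℕ∞ → ℝ} {N N' B : ℕ} (hμ : ∀ m : ℕ, N < m → μ m = 0)
    (hν : ∀ m : ℕ, N' < m → ν m = 0) (hB : N + N' ≤ B) (ψ : ℕ → ℝ) :
    ∑ j ∈ range (B + 1), ψ j * conv μ ν j =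
      ∑ a ∈ range (B + 1), (∑ b ∈ range (B + 1), ψ (a + b) * ν b) * μ a := by
  have hconv (j : ℕ) (hj : j ∈ range (B + 1)) : conv μ ν j =
      ∑ p ∈ range (B + 1) ×ˢ range (B + 1), if p.1 + p.2 = j then μ p.1 * ν p.2 else 0 := by
    rw [conv_natCast, ← sum_filter]
    refine sum_congr ?_ fun _ _ => rfl
    ext ⟨a, b⟩
    simp only [Finset.mem_range] at hj
    simp only [Finset.HasAntidiagonal.mem_antidiagonal, mem_filter, mem_product,
      Finset.mem_range]
    omega
  rw [sum_congr rfl fun j hj => by rw [hconv j hj, mul_sum], sum_comm, sum_product]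
  refine sum_congr rfl fun a _ => ?_
  rw [sum_mul]
  refine sum_congr rfl fun b _ => ?_
  simp_rw [mul_ite, mul_zero]
  rw [sum_ite_eq]
  split_ifs with h
  · ring
  · simp only [Finset.mem_range] at h
    rcases (by omega : N < a ∨ N' < b) with h' | h'
    · simp [hμ a h']
    · simp [hν b h']

theorem FcFin_eq_tsum {c : ℝ} {μ : ℕ∞ → ℝ} (hμ : μ ⊤ = 0) (m : ℕ) :
    FcFin c μ m = ∑' j : ℕ, kingmanKernel c j m * conv μ μ j := by
  rw [FcFin, tsum_enat_eq (by simp [conv_top hμ hμ])]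
  refine tsum_congr fun j => ?_
  simp only [kingmanKernel, Nat.cast_le]
  split_ifs <;> ring

theorem Fc_natCast {c : ℝ} {μ : ℕ∞ → ℝ} (h0 : FcFin c μ 0 = 0) (m : ℕ) :
    Fc c μ m = FcFin c μ m := by
  rcases m with _ | m
  · simp [Fc, h0]
  · rw [Fc, if_neg (ENat.natCast_ne_top _), if_neg (by exact_mod_cast m.succ_ne_zero),
      ENat.toNat_natCast]

theorem Fc_top (c : ℝ) (μ : ℕ∞ → ℝ) : Fc c μ ⊤ = 1 - ∑' n : ℕ, FcFin c μ n := by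
  simp [Fc]

theorem Fc_eq_self {c : ℝ} {μ : ℕ∞ → ℝ} (hμ : IsDist μ) (htop : μ ⊤ = 0)
    (h : ∀ m : ℕ, FcFin c μ m = μ m) : Fc c μ = μ := by
  have h0 : FcFin c μ 0 = 0 := by simpa [hμ.2.1] using h 0
  funext k
  induction k using ENat.recTopCoe with
  | top => rw [Fc_top, tsum_congr h, ← tsum_enat_eq htop, hμ.2.2.tsum_eq, htop, sub_self]
  | coe m => rw [Fc_natCast h0, h]

theorem tsum_ite_le_natCast (μ : ℕ∞ → ℝ) (i : ℕ) :
    ∑' k : ℕ∞, (if k ≤ i then μ k else 0) = ∑ m ∈ range (i + 1), μ m := by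
  rw [tsum_enat_eq (by simp), tsum_eq_sum (s := range (i + 1))]
  · exact sum_congr rfl fun m hm => if_pos (by simpa [Nat.lt_succ_iff] using hm)
  · exact fun m hm => if_neg (by simpa [Nat.lt_succ_iff] using hm)

theorem StDom.of_sum_range_le {μ ν : ℕ∞ → ℝ} (htop : ∑' k, ν k ≤ ∑' k, μ k)
    (h : ∀ i, ∑ m ∈ range i, ν m ≤ ∑ m ∈ range i, μ m) : StDom μ ν := by
  intro x
  induction x using ENat.recTopCoe with
  | top => simpa using htop
  | coe i => simpa only [tsum_ite_le_natCast] using h (i + 1)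

structure IsFinDist (μ : ℕ∞ → ℝ) (N : ℕ) : Prop where
  nonneg : ∀ k, 0 ≤ μ k
  apply_top : μ ⊤ = 0
  apply_zero : μ 0 = 0
  apply_of_lt : ∀ m : ℕ, N < m → μ m = 0
  sum_range : ∑ m ∈ range (N + 1), μ m = 1

namespace IsFinDist

variable {c : ℝ} {μ ν : ℕ∞ → ℝ} {N N' B : ℕ}

theorem mul_apply_eq_zero (hμ : IsFinDist μ N) (hB : N ≤ B) (f : ℕ → ℝ) :
    ∀ m ∉ range (B + 1), f m * μ m = 0 := fun m hm => by
  rw [hμ.apply_of_lt m (by simp at hm; omega), mul_zero]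

theorem summable_mul (hμ : IsFinDist μ N) (f : ℕ → ℝ) : Summable fun m : ℕ => f m * μ m :=
  summable_of_ne_finset_zero (hμ.mul_apply_eq_zero le_rfl f)

theorem tsum_eq_sum_range (hμ : IsFinDist μ N) (hB : N ≤ B) (f : ℕ → ℝ) :
    ∑' m : ℕ, f m * μ m = ∑ m ∈ range (B + 1), f m * μ m :=
  tsum_eq_sum (hμ.mul_apply_eq_zero hB f)

theorem sum_range_eq_one (hμ : IsFinDist μ N) (hB : N ≤ B) : ∑ m ∈ range (B + 1), μ m = 1 := by
  have h := hμ.tsum_eq_sum_range hB fun _ => 1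
  have h' := hμ.tsum_eq_sum_range le_rfl fun _ => 1
  simp only [one_mul] at h h'
  rw [← h, h', hμ.sum_range]

theorem hasSum_natCast (hμ : IsFinDist μ N) : HasSum (fun m : ℕ => μ m) 1 := by
  simpa [hμ.sum_range] using
    hasSum_sum_of_ne_finset_zero (hμ.mul_apply_eq_zero le_rfl fun _ => 1)

theorem hasSum (hμ : IsFinDist μ N) : HasSum μ 1 :=
  (hasSum_enat_iff hμ.apply_top).2 hμ.hasSum_natCast

theorem sum_range_le_one (hμ : IsFinDist μ N) (i : ℕ) : ∑ m ∈ range i, μ m ≤ 1 :=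
  sum_le_hasSum _ (fun m _ => hμ.nonneg m) hμ.hasSum_natCast

theorem distMean_eq (hμ : IsFinDist μ N) (hB : N ≤ B) :
    distMean μ = ∑ m ∈ range (B + 1), (m : ℝ) * μ m :=
  hμ.tsum_eq_sum_range hB _

theorem sum_range_le_distMean (hμ : IsFinDist μ N) (J : ℕ) :
    ∑ m ∈ range J, (m : ℝ) * μ m ≤ distMean μ :=
  (hμ.summable_mul _).sum_le_tsum _ fun m _ => mul_nonneg m.cast_nonneg (hμ.nonneg m)

theorem one_sub_sum_range_le (hμ : IsFinDist μ N) {J : ℕ} (hJ : 0 < J) :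
    1 - ∑ m ∈ range J, μ m ≤ distMean μ / J := by
  have hJ' : (0 : ℝ) < J := by exact_mod_cast hJ
  rw [← hμ.sum_range_eq_one (B := N + J) (by omega),
    ← sum_range_add_sum_Ico _ (by omega : J ≤ N + J + 1), add_sub_cancel_left,
    hμ.distMean_eq (B := N + J) (by omega), sum_div]
  calc ∑ m ∈ Ico J (N + J + 1), μ m
      ≤ ∑ m ∈ Ico J (N + J + 1), (m : ℝ) * μ m / J := sum_le_sum fun m hm => by
        have : (J : ℝ) ≤ m := by exact_mod_cast (mem_Ico.1 hm).1
        rw [le_div_iff₀ hJ']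
        nlinarith [hμ.nonneg m]
    _ ≤ ∑ m ∈ range (N + J + 1), (m : ℝ) * μ m / J :=
        sum_le_sum_of_subset_of_nonneg (fun m hm => by simp at hm ⊢; omega) fun m _ _ =>
          div_nonneg (mul_nonneg m.cast_nonneg (hμ.nonneg m)) hJ'.le

protected theorem conv (hμ : IsFinDist μ N) : IsFinDist (conv μ μ) (N + N) where
  nonneg k := tsum_nonneg fun p => by
    split_ifs
    · exact mul_nonneg (hμ.nonneg _) (hμ.nonneg _)
    · exact le_rfl
  apply_top := conv_top hμ.apply_top hμ.apply_top
  apply_zero := by simpa [hμ.apply_zero] using conv_natCast μ μ 0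
  apply_of_lt m hm := by
    rw [conv_natCast]
    refine sum_eq_zero fun p hp => ?_
    rw [Finset.HasAntidiagonal.mem_antidiagonal] at hp
    rcases (by omega : N < p.1 ∨ N < p.2) with h | h
    · simp [hμ.apply_of_lt _ h]
    · simp [hμ.apply_of_lt _ h]
  sum_range := by
    simpa [← sum_mul, hμ.sum_range_eq_one (B := N + N) (by omega)] using
      sum_range_mul_conv hμ.apply_of_lt hμ.apply_of_lt le_rfl fun _ => 1

theorem distMean_conv (hμ : IsFinDist μ N) : distMean (conv μ μ) = 2 * distMean μ := by
  have hB : N ≤ N + N := by omega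
  have inner (a : ℕ) : ∑ b ∈ range (N + N + 1), ((a + b : ℕ) : ℝ) * μ b = a + distMean μ := by
    simp [add_mul, sum_add_distrib, ← mul_sum, hμ.sum_range_eq_one hB, hμ.distMean_eq hB]
  rw [hμ.conv.distMean_eq le_rfl, sum_range_mul_conv hμ.apply_of_lt hμ.apply_of_lt le_rfl]
  simp only [inner, add_mul, sum_add_distrib, ← hμ.distMean_eq hB]
  rw [← mul_sum, hμ.sum_range_eq_one hB]
  ring

theorem FcFin_eq_sum (hμ : IsFinDist μ N) (hB : N + N ≤ B) (m : ℕ) :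
    FcFin c μ m = ∑ j ∈ range (B + 1), kingmanKernel c j m * conv μ μ j := by
  rw [FcFin_eq_tsum hμ.apply_top]
  exact hμ.conv.tsum_eq_sum_range hB _

theorem FcFin_zero (hμ : IsFinDist μ N) : FcFin c μ 0 = 0 := by
  rw [hμ.FcFin_eq_sum le_rfl]
  refine sum_eq_zero fun j _ => ?_
  rcases j with _ | j
  · simp [hμ.conv.apply_zero]
  · rw [kingmanKernel_zero_right (by omega), zero_mul]

theorem sum_range_mul_FcFin (hμ : IsFinDist μ N) (hB : N + N ≤ B) (φ : ℕ → ℝ) :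
    ∑ m ∈ range (B + 1), φ m * FcFin c μ m =
      ∑ j ∈ range (B + 1), kingmanExpect c φ j * conv μ μ j := by
  simp_rw [hμ.FcFin_eq_sum hB, mul_sum]
  rw [sum_comm]
  refine sum_congr rfl fun j hj => ?_
  rw [← sum_range_mul_kingmanKernel (mem_range_succ_iff.1 hj), sum_mul]
  exact sum_congr rfl fun m _ => by ring

protected theorem Fc (hc : 0 < c) (hμ : IsFinDist μ N) : IsFinDist (Fc c μ) (N + N) := by
  have hout (m : ℕ) (hm : N + N < m) : FcFin c μ m = 0 := by
    rw [hμ.FcFin_eq_sum le_rfl]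
    exact sum_eq_zero fun j hj => by
      rw [kingmanKernel_of_lt (by simp at hj; omega), zero_mul]
  have htotal : ∑ m ∈ range (N + N + 1), FcFin c μ m = 1 := by
    simpa [kingmanExpect_one hc, hμ.conv.sum_range_eq_one le_rfl] using
      hμ.sum_range_mul_FcFin (c := c) le_rfl fun _ => 1
  have htop : Fc c μ ⊤ = 0 := by
    rw [Fc_top, tsum_eq_sum (s := range (N + N + 1)) fun m hm => hout m (by simp at hm; omega),
      htotal, sub_self]
  have hnat := Fc_natCast (c := c) hμ.FcFin_zero
  refine ⟨fun k => ?_, htop, by simp [Fc], fun m hm => by rw [hnat, hout m hm],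
    by simpa [hnat] using htotal⟩
  induction k using ENat.recTopCoe with
  | top => exact htop.ge
  | coe m =>
    rw [hnat, hμ.FcFin_eq_sum le_rfl]
    exact sum_nonneg fun j _ => mul_nonneg (kingmanKernel_nonneg hc _ _) (hμ.conv.nonneg _)

theorem distMean_Fc_le (hc : 0 < c) (hμ : IsFinDist μ N) :
    distMean (Fc c μ) ≤ 1 + 8 * c ^ 2 + distMean μ / 2 := by
  have hconv := hμ.conv
  rw [(hμ.Fc hc).distMean_eq le_rfl]
  simp_rw [Fc_natCast hμ.FcFin_zero]
  rw [hμ.sum_range_mul_FcFin le_rfl]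
  calc ∑ j ∈ range (N + N + 1), kingmanExpect c (fun k => k) j * conv μ μ j
      ≤ ∑ j ∈ range (N + N + 1), (1 + 8 * c ^ 2 + (j : ℝ) / 4) * conv μ μ j :=
        sum_le_sum fun j _ =>
          mul_le_mul_of_nonneg_right (kingmanExpect_id_le hc j) (hconv.nonneg _)
    _ = 1 + 8 * c ^ 2 + distMean (conv μ μ) / 4 := by
        simp only [add_mul, sum_add_distrib, ← mul_sum, hconv.sum_range_eq_one le_rfl,
          hconv.distMean_eq le_rfl, sum_div, div_mul_eq_mul_div]
        ring
    _ = 1 + 8 * c ^ 2 + distMean μ / 2 := by rw [hμ.distMean_conv]; ring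

theorem sum_range_Fc (hμ : IsFinDist μ N) (hB : N + N ≤ B) {i : ℕ} (hi : i ≤ B + 1) :
    ∑ m ∈ range i, Fc c μ m = ∑ a ∈ range (B + 1),
      (∑ b ∈ range (B + 1), kingmanExpect c (fun k => if k < i then 1 else 0) (a + b) * μ b) *
        μ a := by
  rw [← sum_range_mul_conv hμ.apply_of_lt hμ.apply_of_lt hB, ← hμ.sum_range_mul_FcFin hB]
  have hrange : (range (B + 1)).filter (· < i) = range i := by
    ext m
    simp only [mem_filter, Finset.mem_range]
    omega
  simp only [ite_mul, one_mul, zero_mul]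
  rw [← sum_filter, hrange]
  exact sum_congr rfl fun m _ => Fc_natCast hμ.FcFin_zero m

theorem sum_range_Fc_le (hc : 0 < c) (hμ : IsFinDist μ N) (hν : IsFinDist ν N')
    (h : ∀ i, ∑ m ∈ range i, ν m ≤ ∑ m ∈ range i, μ m) (i : ℕ) :
    ∑ m ∈ range i, Fc c ν m ≤ ∑ m ∈ range i, Fc c μ m := by
  set B := N + N + (N' + N') + i
  set g := kingmanExpect c fun k => if k < i then (1 : ℝ) else 0
  have hg : Antitone g := kingmanExpect_antitone hc fun a b hab => by
    split_ifs <;> first | (exfalso; omega) | norm_num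
  have htot : ∑ m ∈ range (B + 1), ν m = ∑ m ∈ range (B + 1), μ m := by
    rw [hν.sum_range_eq_one (by omega), hμ.sum_range_eq_one (by omega)]
  rw [hν.sum_range_Fc (B := B) (by omega) (by omega),
    hμ.sum_range_Fc (B := B) (by omega) (by omega)]
  calc ∑ a ∈ range (B + 1), (∑ b ∈ range (B + 1), g (a + b) * ν b) * ν a
      ≤ ∑ a ∈ range (B + 1), (∑ b ∈ range (B + 1), g (a + b) * μ b) * ν a :=
        sum_le_sum fun a _ => mul_le_mul_of_nonneg_right
          (sum_range_mul_le_of_antitone (fun b b' hb => hg (by omega)) h htot) (hν.nonneg _)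
    _ ≤ ∑ a ∈ range (B + 1), (∑ b ∈ range (B + 1), g (a + b) * μ b) * μ a :=
        sum_range_mul_le_of_antitone (fun a a' ha => sum_le_sum fun b _ =>
          mul_le_mul_of_nonneg_right (hg (by omega)) (hμ.nonneg _)) h htot

end IsFinDist

theorem isFinDist_delta_one : IsFinDist (delta 1) 1 where
  nonneg k := by unfold delta; split_ifs <;> norm_num
  apply_top := by simp [delta]
  apply_zero := by simp [delta]
  apply_of_lt m hm := if_neg (by exact_mod_cast hm.ne')
  sum_range := by simp [delta]

theorem distMean_delta_one : distMean (delta 1) = 1 := by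
  simp [isFinDist_delta_one.distMean_eq le_rfl, delta]

theorem sum_range_le_sum_range_delta_one {μ : ℕ∞ → ℝ} {N : ℕ} (hμ : IsFinDist μ N) (i : ℕ) :
    ∑ m ∈ range i, μ m ≤ ∑ m ∈ range i, delta 1 m := by
  rcases lt_or_ge i 2 with hi | hi
  · interval_cases i <;> simp [hμ.apply_zero, delta]
  · obtain ⟨B, rfl⟩ : ∃ B, i = B + 1 := ⟨i - 1, by omega⟩
    rw [isFinDist_delta_one.sum_range_eq_one (by omega)]
    exact hμ.sum_range_le_one _

noncomputable section Iterates

variable {c : ℝ}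

theorem isFinDist_iterate (hc : 0 < c) (n : ℕ) : IsFinDist ((Fc c)^[n] (delta 1)) (2 ^ n) := by
  induction n with
  | zero => exact isFinDist_delta_one
  | succ n ih =>
    rw [Function.iterate_succ_apply', pow_succ, mul_two]
    exact ih.Fc hc

theorem sum_range_iterate_succ_le (hc : 0 < c) (n i : ℕ) :
    ∑ m ∈ range i, (Fc c)^[n + 1] (delta 1) m ≤ ∑ m ∈ range i, (Fc c)^[n] (delta 1) m := by
  induction n generalizing i with
  | zero => exact sum_range_le_sum_range_delta_one (isFinDist_iterate hc 1) i
  | succ n ih =>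
    have h := (isFinDist_iterate hc n).sum_range_Fc_le hc (isFinDist_iterate hc (n + 1)) ih i
    rwa [← Function.iterate_succ_apply' (Fc c) (n + 1),
      ← Function.iterate_succ_apply' (Fc c) n] at h

theorem distMean_iterate_le (hc : 0 < c) (n : ℕ) :
    distMean ((Fc c)^[n] (delta 1)) ≤ 2 + 16 * c ^ 2 := by
  induction n with
  | zero =>
    rw [Function.iterate_zero_apply, distMean_delta_one]
    nlinarith [sq_nonneg c]
  | succ n ih =>
    rw [Function.iterate_succ_apply']
    linarith [(isFinDist_iterate hc n).distMean_Fc_le hc]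

-- `limUnder` is a junk value unless the limit exists; `tendsto_iterate_apply` shows it does.
def limitDist (c : ℝ) (k : ℕ∞) : ℝ := limUnder atTop fun n => (Fc c)^[n] (delta 1) k

theorem tendsto_iterate_apply (hc : 0 < c) (k : ℕ∞) :
    Tendsto (fun n => (Fc c)^[n] (delta 1) k) atTop (𝓝 (limitDist c k)) := by
  refine tendsto_nhds_limUnder ?_
  have hcdf (i : ℕ) :
      ∃ L, Tendsto (fun n => ∑ m ∈ range i, (Fc c)^[n] (delta 1) m) atTop (𝓝 L) :=
    ⟨_, tendsto_atTop_ciInf (antitone_nat_of_succ_le fun n => sum_range_iterate_succ_le hc n i)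
      ⟨0, by
        rintro _ ⟨n, rfl⟩
        exact sum_nonneg fun m _ => (isFinDist_iterate hc n).nonneg _⟩⟩
  induction k using ENat.recTopCoe with
  | top =>
    refine ⟨0, ?_⟩
    simp_rw [(isFinDist_iterate hc _).apply_top]
    exact tendsto_const_nhds
  | coe m =>
    obtain ⟨L₁, h₁⟩ := hcdf (m + 1)
    obtain ⟨L₀, h₀⟩ := hcdf m
    exact ⟨L₁ - L₀, by simpa only [sum_range_succ_sub_sum] using h₁.sub h₀⟩

theorem limitDist_nonneg (hc : 0 < c) (k : ℕ∞) : 0 ≤ limitDist c k :=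
  ge_of_tendsto' (tendsto_iterate_apply hc k) fun n => (isFinDist_iterate hc n).nonneg k

theorem limitDist_top (hc : 0 < c) : limitDist c ⊤ = 0 :=
  tendsto_nhds_unique (tendsto_iterate_apply hc ⊤) <| by
    simp_rw [(isFinDist_iterate hc _).apply_top]
    exact tendsto_const_nhds

theorem limitDist_zero (hc : 0 < c) : limitDist c 0 = 0 :=
  tendsto_nhds_unique (tendsto_iterate_apply hc 0) <| by
    simp_rw [(isFinDist_iterate hc _).apply_zero]
    exact tendsto_const_nhds

-- Tightness: Markov's inequality with the uniform mean bound.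
theorem hasSum_limitDist (hc : 0 < c) : HasSum (limitDist c) 1 := by
  refine (hasSum_enat_iff (limitDist_top hc)).2 <|
    hasSum_of_tendsto_of_tail_le (f := fun n m => (Fc c)^[n] (delta 1) m) (a := fun _ => 1)
      (fun n m => (isFinDist_iterate hc n).nonneg _)
      (fun n => (isFinDist_iterate hc n).hasSum_natCast) (fun m => tendsto_iterate_apply hc m)
      tendsto_const_nhds (tendsto_const_div_atTop_nhds_zero_nat (2 + 16 * c ^ 2)) ?_
  filter_upwards [eventually_gt_atTop 0] with J hJ n
  have hmarkov := (isFinDist_iterate hc n).one_sub_sum_range_le hJ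
  have : distMean ((Fc c)^[n] (delta 1)) / J ≤ (2 + 16 * c ^ 2) / J :=
    div_le_div_of_nonneg_right (distMean_iterate_le hc n) J.cast_nonneg
  linarith

theorem summable_mul_limitDist (hc : 0 < c) :
    Summable fun m : ℕ => (m : ℝ) * limitDist c m :=
  summable_of_sum_range_le (fun m => mul_nonneg m.cast_nonneg (limitDist_nonneg hc _)) fun J =>
    le_of_tendsto' (tendsto_finsetSum _ fun m _ => (tendsto_iterate_apply hc m).const_mul _)
      fun n => ((isFinDist_iterate hc n).sum_range_le_distMean J).trans (distMean_iterate_le hc n)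

theorem tendsto_conv_iterate (hc : 0 < c) (j : ℕ) :
    Tendsto (fun n => conv ((Fc c)^[n] (delta 1)) ((Fc c)^[n] (delta 1)) j) atTop
      (𝓝 (conv (limitDist c) (limitDist c) j)) := by
  simp_rw [conv_natCast]
  exact tendsto_finsetSum _ fun p _ =>
    (tendsto_iterate_apply hc _).mul (tendsto_iterate_apply hc _)

-- The tails of the series for `FcFin` at the iterates are uniformly small: `conv μₙ μₙ` has mean
-- `2 * distMean μₙ ≤ 2 * (2 + 16c²)`, and Markov's inequality applies.
theorem FcFin_limitDist (hc : 0 < c) (m : ℕ) : FcFin c (limitDist c) m = limitDist c m := by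
  set μ : ℕ → ℕ∞ → ℝ := fun n => (Fc c)^[n] (delta 1)
  have hsum (n : ℕ) :
      HasSum (fun j : ℕ => kingmanKernel c j m * conv (μ n) (μ n) j) (μ (n + 1) m) := by
    have hμ := isFinDist_iterate hc n
    simp only [μ, Function.iterate_succ_apply', Fc_natCast hμ.FcFin_zero,
      FcFin_eq_tsum hμ.apply_top]
    exact (hμ.conv.summable_mul _).hasSum
  have hlim := hasSum_of_tendsto_of_tail_le (ε := fun J : ℕ => 2 * (2 + 16 * c ^ 2) / J)
    (fun n j => mul_nonneg (kingmanKernel_nonneg hc j m)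
      ((isFinDist_iterate hc n).conv.nonneg _)) hsum
    (fun j => (tendsto_conv_iterate hc j).const_mul _)
    ((tendsto_iterate_apply hc m).comp (tendsto_add_atTop_nat 1))
    (tendsto_const_div_atTop_nhds_zero_nat _) ?_
  · rw [FcFin_eq_tsum (limitDist_top hc), hlim.tsum_eq]
  filter_upwards [eventually_gt_atTop 0] with J hJ n
  have hμ := isFinDist_iterate hc n
  have htail := sub_sum_range_le_of_le (hsum n) hμ.conv.hasSum_natCast
    (fun j => mul_le_of_le_one_left (hμ.conv.nonneg _) (kingmanKernel_le_one hc j m)) J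
  have hmarkov := hμ.conv.one_sub_sum_range_le hJ
  rw [hμ.distMean_conv] at hmarkov
  have : 2 * distMean (μ n) / J ≤ 2 * (2 + 16 * c ^ 2) / J := by
    gcongr
    exact distMean_iterate_le hc n
  linarith

end Iterates

/-- The iterates `F_cⁿ(δ₁)` are nondecreasing in the stochastic order
and converge weakly to a limit `μ₁` supported on `ℕ⁺` with finite mean and `F_c(μ₁) = μ₁`. -/
theorem iterates_delta_one (c : ℝ) (hc : 0 < c) :
    ∃ μ₁ : ℕ∞ → ℝ,
      (∀ n : ℕ, StDom ((Fc c)^[n] (delta 1)) ((Fc c)^[n + 1] (delta 1))) ∧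
      (∀ k : ℕ, Tendsto (fun n : ℕ => (Fc c)^[n] (delta 1) (k : ℕ∞)) atTop (𝓝 (μ₁ (k : ℕ∞)))) ∧
      MemS1 μ₁ ∧ Fc c μ₁ = μ₁ := by
  have hdist : IsDist (limitDist c) :=
    ⟨limitDist_nonneg hc, limitDist_zero hc, hasSum_limitDist hc⟩
  refine ⟨limitDist c, fun n => ?_, fun k => tendsto_iterate_apply hc k,
    ⟨hdist, limitDist_top hc, summable_mul_limitDist hc⟩,
    Fc_eq_self hdist (limitDist_top hc) (FcFin_limitDist hc)⟩
  refine StDom.of_sum_range_le ?_ (sum_range_iterate_succ_le hc n)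
  rw [(isFinDist_iterate hc n).hasSum.tsum_eq, (isFinDist_iterate hc (n + 1)).hasSum.tsum_eq]
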